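/- arXiv:math/0505062 — 8 statements merged into one kernel-verified Lean document; each statement's English description precedes it below -/
import Mathlib

section
/- The exceptional conic C = {(x,y) : (x−1)(y−1) = 1} is collapsed by f to the single point (0, a+1): for all a, b ∈ ℂ and every (x,y) ∈ ℂ² with x ≠ 0, x ≠ 1, y ≠ 0 and (x−1)(y−1) = 1, one has f(x,y) = (0, a+1). -/
/-- First component of the birational map `f = f_{a,b}`. -/
noncomputable def f1 (x y : ℂ) : ℂ := 1 - x + x / y

/-- Second component of the birational map `f = f_{a,b}`. -/
noncomputable def f2 (a b x y : ℂ) : ℂ := b * f1 x y + a + y - y / x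

theorem mul_eq_add_of_sub_one_mul_sub_one_eq_one {R : Type*} [CommRing R] {x y : R}
    (hC : (x - 1) * (y - 1) = 1) : x * y = x + y := by
  linear_combination hC

theorem f1_eq_zero_of_mem_conic {x y : ℂ} (hy0 : y ≠ 0) (hC : (x - 1) * (y - 1) = 1) :
    f1 x y = 0 := by
  unfold f1
  field_simp
  linear_combination -mul_eq_add_of_sub_one_mul_sub_one_eq_one hC

theorem f2_eq_add_one_of_mem_conic (a b : ℂ) {x y : ℂ} (hx0 : x ≠ 0) (hy0 : y ≠ 0)
    (hC : (x - 1) * (y - 1) = 1) : f2 a b x y = a + 1 := by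
  unfold f2
  rw [f1_eq_zero_of_mem_conic hy0 hC]
  field_simp
  linear_combination mul_eq_add_of_sub_one_mul_sub_one_eq_one hC

theorem conic_collapses_general (a b : ℂ) (x y : ℂ) (hx0 : x ≠ 0) (hy0 : y ≠ 0)
    (hC : (x - 1) * (y - 1) = 1) :
    (f1 x y, f2 a b x y) = (0, a + 1) :=
  Prod.ext (f1_eq_zero_of_mem_conic hy0 hC) (f2_eq_add_one_of_mem_conic a b hx0 hy0 hC)

/-- The exceptional conic `C = {(x-1)(y-1) = 1}` is collapsed by `f` to the single point
`(0, a+1)`. -/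
theorem conic_collapses (a b : ℂ) (x y : ℂ) (hx0 : x ≠ 0) (hx1 : x ≠ 1) (hy0 : y ≠ 0)
    (hC : (x - 1) * (y - 1) = 1) :
    (f1 x y, f2 a b x y) = (0, a + 1) :=
  conic_collapses_general a b x y hx0 hy0 hC
end

section
/- On the line at infinity, f acts on slopes by t ↦ b − t: for all a, b ∈ ℂ and every t ∈ ℂ with t ≠ 0, the quotient f₂(s, t·s)/f₁(s, t·s) tends to b − t as the complex parameter s tends to infinity (i.e., along the filter |s| → ∞, where for all s of sufficiently large modulus the point (s, t·s) lies in the domain of f and f₁(s, t·s) ≠ 0). -/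
open Filter Bornology

/-! On the line `y = t x` both components of `f` are affine in `x`: `f₁ = 1 + 1/t - x` and
`f₂ = b f₁ + (a - t) + t x`. Hence `f₂ / f₁ = b + (a - t + t x)/(1 + 1/t - x)`, and a ratio of
affine functions tends to the ratio of the leading coefficients, here `-t`, as `|x| → ∞`. -/

open Topology

theorem tendsto_affine_div_const_sub_cobounded {𝕜 : Type*} [NormedField 𝕜] (p q c : 𝕜) :
    Tendsto (fun s : 𝕜 => (p + q * s) / (c - s)) (cobounded 𝕜) (𝓝 (-q)) := by
  have hinv : Tendsto (fun s : 𝕜 => (c - s)⁻¹) (cobounded 𝕜) (𝓝 0) :=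
    tendsto_inv₀_cobounded.comp (tendsto_const_sub_cobounded c)
  have hlim : Tendsto (fun s : 𝕜 => -q + (p + q * c) * (c - s)⁻¹) (cobounded 𝕜) (𝓝 (-q)) := by
    simpa using (hinv.const_mul (p + q * c)).const_add (-q)
  refine hlim.congr' ?_
  filter_upwards [eventually_ne_cobounded c] with s hs
  field_simp [sub_ne_zero.2 hs.symm]
  ring

theorem f1_mul_right_eq {t s : ℂ} (ht : t ≠ 0) (hs : s ≠ 0) : f1 s (t * s) = 1 + t⁻¹ - s := by
  unfold f1
  field_simp
  ring

theorem f2_mul_right_eq (a b : ℂ) {t s : ℂ} (hs : s ≠ 0) :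
    f2 a b s (t * s) = b * f1 s (t * s) + (a - t + t * s) := by
  rw [f2, mul_div_cancel_right₀ t hs]
  ring

/-- On the line at infinity, `f` acts on slopes by `t ↦ b - t`: along `|s| → ∞` the point
`(s, t·s)` eventually lies in the domain of `f` with `f₁(s, t·s) ≠ 0`, and the slope
`f₂(s, t·s)/f₁(s, t·s)` of the image tends to `b - t`. -/
theorem slope_at_infinity (a b t : ℂ) (ht : t ≠ 0) :
    (∀ᶠ s : ℂ in cobounded ℂ, s ≠ 0 ∧ t * s ≠ 0 ∧ f1 s (t * s) ≠ 0) ∧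
    Tendsto (fun s : ℂ => f2 a b s (t * s) / f1 s (t * s)) (cobounded ℂ) (nhds (b - t)) := by
  have hdom : ∀ᶠ s : ℂ in cobounded ℂ, s ≠ 0 ∧ t * s ≠ 0 ∧ f1 s (t * s) ≠ 0 := by
    filter_upwards [eventually_ne_cobounded 0, eventually_ne_cobounded (1 + t⁻¹)] with s hs hsc
    refine ⟨hs, mul_ne_zero ht hs, ?_⟩
    rw [f1_mul_right_eq ht hs]
    exact sub_ne_zero.2 hsc.symm
  refine ⟨hdom, ?_⟩
  have hlim := (tendsto_affine_div_const_sub_cobounded (a - t) t (1 + t⁻¹)).const_add b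
  rw [← sub_eq_add_neg] at hlim
  refine hlim.congr' ?_
  filter_upwards [hdom] with s hdom_s
  obtain ⟨hs, -, hf1⟩ := hdom_s
  rw [eq_comm, f2_mul_right_eq a b hs, add_div, mul_div_cancel_right₀ b hf1, f1_mul_right_eq ht hs]
end

section
/- The exceptional curve V₁ = {x = 0} is sent by f to the exceptional fiber V₃ with coordinate t₃ = t₁ − 1: for all a, b ∈ ℂ and every y ∈ ℂ with y ≠ 0, the product (f₁(x, y) − 1)·(f₂(x, y) − 1) tends to y − 1 as x → 0 (the limit taken along nonzero x for which f is defined at (x,y)). -/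
/-!
`f₁ - 1 = x (y⁻¹ - 1)` vanishes to first order at `x = 0`, while `f₂` has the simple pole `-y/x`
there. Their product contributes `-(y⁻¹ - 1) y = y - 1`, and every other term of
`(f₁ - 1)(f₂ - 1)` is continuous in `x` and vanishes at `x = 0`.
-/

open Filter

open Topology

theorem f1_sub_one (x y : ℂ) : f1 x y - 1 = x * (y⁻¹ - 1) := by
  rw [f1, div_eq_mul_inv]
  ring

theorem f1_sub_one_mul_f2_sub_one (a b : ℂ) {x y : ℂ} (hx : x ≠ 0) (hy : y ≠ 0) :
    (f1 x y - 1) * (f2 a b x y - 1) =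
      (f1 x y - 1) * (b * f1 x y + a + y - 1) + (y - 1) := by
  rw [f2, f1_sub_one]
  field_simp
  ring

theorem tendsto_f1_nhds_zero (y : ℂ) : Tendsto (fun x => f1 x y) (𝓝 0) (𝓝 1) := by
  have h : Continuous fun x => f1 x y := by unfold f1; fun_prop
  simpa [f1] using h.tendsto 0

/-- The exceptional curve `V₁ = {x = 0}` is sent by `f` to the exceptional fiber `V₃`
with coordinate `t₃ = t₁ - 1`: as `x → 0` along nonzero `x`, the quantity
`(f₁(x,y) - 1)·(f₂(x,y) - 1)`, recording the `t₃`-coordinate of the image, tends to `y - 1`. -/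
theorem V1_to_V3 (a b : ℂ) (y : ℂ) (hy : y ≠ 0) :
    Tendsto (fun x : ℂ => (f1 x y - 1) * (f2 a b x y - 1)) (nhdsWithin 0 {x : ℂ | x ≠ 0})
      (nhds (y - 1)) := by
  have hf1 := (tendsto_f1_nhds_zero y).mono_left (nhdsWithin_le_nhds (s := {x : ℂ | x ≠ 0}))
  have hlim : Tendsto (fun x => (f1 x y - 1) * (b * f1 x y + a + y - 1) + (y - 1))
      (𝓝[{x : ℂ | x ≠ 0}] 0) (𝓝 ((1 - 1) * (b * 1 + a + y - 1) + (y - 1))) := by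
    have := ((hf1.sub_const 1).mul ((((hf1.const_mul b).add_const a).add_const y).sub_const 1))
    exact this.add_const (y - 1)
  rw [sub_self, zero_mul, zero_add] at hlim
  refine hlim.congr' ?_
  filter_upwards [self_mem_nhdsWithin] with x hx
  exact (f1_sub_one_mul_f2_sub_one a b hx hy).symm
end

section
/- The exceptional fiber V₃ is sent by f to V₁ = {x = 0} with coordinate t₁ = t₃ + a: for all a, b ∈ ℂ and every t ∈ ℂ, the point f(1 + t/s, 1 + s) tends to (0, t + a) as the complex parameter s tends to infinity (i.e., along |s| → ∞, the points (1 + t/s, 1 + s) eventually lying in the domain of f). -/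
open Filter Bornology

/-- The exceptional fiber `V₃` is sent by `f` to `V₁ = {x = 0}` with coordinate
`t₁ = t₃ + a`: as `|s| → ∞`, the image `f(1 + t/s, 1 + s)` tends to `(0, t + a)`. -/
theorem V3_to_V1 (a b t : ℂ) :
    Tendsto (fun s : ℂ => (f1 (1 + t / s) (1 + s), f2 a b (1 + t / s) (1 + s)))
      (cobounded ℂ) (nhds ((0 : ℂ), t + a)) := by
  set g1 : ℂ → ℂ := fun u => -t * u + (1 + t * u) * (u / (u + 1)) with hg1def
  set g2 : ℂ → ℂ := fun u => b * g1 u + a + 1 + (t - 1) / (1 + t * u) with hg2def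
  have hc1 : ContinuousAt g1 0 := by
    apply ContinuousAt.add (by fun_prop)
    apply ContinuousAt.mul (by fun_prop)
    exact ContinuousAt.div (by fun_prop) (by fun_prop) (by norm_num)
  have hc2 : ContinuousAt g2 0 := by
    apply ContinuousAt.add
    · fun_prop
    · exact ContinuousAt.div (by fun_prop) (by fun_prop) (by norm_num)
  have hg10 : g1 0 = 0 := by simp [hg1def]
  have hg20 : g2 0 = t + a := by simp [hg2def, hg10]; ring
  have hu : Tendsto (fun s : ℂ => s⁻¹) (cobounded ℂ) (nhds 0) := tendsto_inv₀_cobounded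
  have h1 : Tendsto (fun s : ℂ => g1 s⁻¹) (cobounded ℂ) (nhds 0) := by
    rw [← hg10]; exact (hc1.tendsto).comp hu
  have h2 : Tendsto (fun s : ℂ => g2 s⁻¹) (cobounded ℂ) (nhds (t + a)) := by
    rw [← hg20]; exact (hc2.tendsto).comp hu
  have hev : ∀ᶠ s : ℂ in cobounded ℂ,
      (f1 (1 + t / s) (1 + s), f2 a b (1 + t / s) (1 + s)) = (g1 s⁻¹, g2 s⁻¹) := by
    have := tendsto_norm_cobounded_atTop (E := ℂ)
    filter_upwards [this.eventually (eventually_gt_atTop (max 1 ‖t‖))] with s hs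
    have hs1 : (1 : ℝ) < ‖s‖ := lt_of_le_of_lt (le_max_left _ _) hs
    have hst : ‖t‖ < ‖s‖ := lt_of_le_of_lt (le_max_right _ _) hs
    have hs0 : s ≠ 0 := by
      intro h; rw [h] at hs1; simp at hs1; linarith
    have hsp1 : 1 + s ≠ 0 := by
      intro h
      have : s = -1 := by linear_combination h
      rw [this] at hs1; simp at hs1
    have hspt : s + t ≠ 0 := by
      intro h
      have : t = -s := by linear_combination h
      rw [this, norm_neg] at hst; exact lt_irrefl _ hst
    have hx : 1 + t / s ≠ 0 := by
      have e : 1 + t / s = (s + t) / s := by field_simp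
      rw [e]; exact div_ne_zero hspt hs0
    simp only [f1, f2, hg1def, hg2def, Prod.mk.injEq]
    constructor
    · field_simp
      ring
    · field_simp
      ring
  exact Tendsto.congr' (by filter_upwards [hev] with s h using h.symm) (h1.prodMk_nhds h2)
end

section
/- The exceptional fiber V₅ over [1:b:0] is sent by f to the exceptional fiber V₄ over [1:0:0] with coordinate t₄ = t₅ + a + 1: for all a ∈ ℂ and b ∈ ℂ with b ≠ 0, and every t ∈ ℂ, as the complex parameter s tends to infinity one has f₂(s, b·s + t) → t + a + 1 while |f₁(s, b·s + t)| → ∞. -/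
open Filter Bornology

/-!
Along the line `y = b s + t` both components have exact partial-fraction forms,
`f₂ = t + a + 1 - t/(b s + t) - t/s` and `f₁ = -s + 1 + 1/b - t/(b (b s + t))`.
Since `b ≠ 0`, `b s + t → ∞` with `s`, so the fractional terms vanish at infinity: `f₂` converges,
and `f₁` differs from `-s` by a convergent term.
-/

theorem Filter.Tendsto.cobounded_add {α E : Type*} [SeminormedAddCommGroup E] {l : Filter α}
    {f g : α → E} {c : E} (hf : Tendsto f l (cobounded E)) (hg : Tendsto g l (nhds c)) :
    Tendsto (fun x => f x + g x) l (cobounded E) := by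
  rw [← tendsto_norm_atTop_iff_cobounded] at hf ⊢
  refine tendsto_atTop_mono (fun x => ?_) (hf.atTop_add hg.norm.neg)
  have := norm_sub_norm_le (f x) (-g x)
  rwa [norm_neg, sub_neg_eq_add] at this

theorem tendsto_mul_add_const_cobounded {α : Type*} [NormedDivisionRing α] {b : α} (hb : b ≠ 0)
    (t : α) : Tendsto (fun s => b * s + t) (cobounded α) (cobounded α) :=
  (tendsto_add_const_cobounded t).comp (tendsto_mul_left_cobounded hb)

theorem f2_mul_add_eq (a : ℂ) {b t s : ℂ} (hs : s ≠ 0) (hbs : b * s + t ≠ 0) :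
    f2 a b s (b * s + t) = t + a + 1 - t * (b * s + t)⁻¹ - t * s⁻¹ := by
  simp only [f2, f1]
  field_simp
  ring

theorem f1_mul_add_eq {b t s : ℂ} (hb : b ≠ 0) (hbs : b * s + t ≠ 0) :
    f1 s (b * s + t) = -s + (1 + b⁻¹ - b⁻¹ * t * (b * s + t)⁻¹) := by
  simp only [f1]
  field_simp
  linear_combination mul_inv_cancel₀ hbs

theorem tendsto_f2_mul_add_cobounded (a : ℂ) {b : ℂ} (hb : b ≠ 0) (t : ℂ) :
    Tendsto (fun s => f2 a b s (b * s + t)) (cobounded ℂ) (nhds (t + a + 1)) := by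
  have hinv := tendsto_inv₀_cobounded.comp (tendsto_mul_add_const_cobounded hb t)
  have hlim : Tendsto (fun s : ℂ => t + a + 1 - t * (b * s + t)⁻¹ - t * s⁻¹) (cobounded ℂ)
      (nhds (t + a + 1)) := by
    simpa using (tendsto_const_nhds.sub (tendsto_const_nhds.mul hinv)).sub
      (tendsto_const_nhds.mul tendsto_inv₀_cobounded)
  refine hlim.congr' ?_
  filter_upwards [eventually_ne_cobounded 0,
    (tendsto_mul_add_const_cobounded hb t).eventually_ne_cobounded 0] with s hs hbs
  exact (f2_mul_add_eq a hs hbs).symm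

theorem tendsto_f1_mul_add_cobounded {b : ℂ} (hb : b ≠ 0) (t : ℂ) :
    Tendsto (fun s => f1 s (b * s + t)) (cobounded ℂ) (cobounded ℂ) := by
  have hinv := tendsto_inv₀_cobounded.comp (tendsto_mul_add_const_cobounded hb t)
  have hbdd : Tendsto (fun s : ℂ => 1 + b⁻¹ - b⁻¹ * t * (b * s + t)⁻¹) (cobounded ℂ)
      (nhds (1 + b⁻¹)) := by
    simpa using tendsto_const_nhds.sub (tendsto_const_nhds.mul hinv)
  refine (tendsto_neg_cobounded.cobounded_add hbdd).congr' ?_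
  filter_upwards [(tendsto_mul_add_const_cobounded hb t).eventually_ne_cobounded 0] with s hbs
  exact (f1_mul_add_eq hb hbs).symm

/-- The exceptional fiber `V₅` over `[1:b:0]` is sent by `f` to the exceptional fiber `V₄`
over `[1:0:0]` with coordinate `t₄ = t₅ + a + 1`: as `|s| → ∞`, one has
`f₂(s, b·s + t) → t + a + 1` while `|f₁(s, b·s + t)| → ∞`. -/
theorem V5_to_V4 (a b : ℂ) (hb : b ≠ 0) (t : ℂ) :
    Tendsto (fun s : ℂ => f2 a b s (b * s + t)) (cobounded ℂ) (nhds (t + a + 1)) ∧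
    Tendsto (fun s : ℂ => ‖f1 s (b * s + t)‖) (cobounded ℂ) atTop :=
  ⟨tendsto_f2_mul_add_cobounded a hb t,
    tendsto_norm_atTop_iff_cobounded.2 (tendsto_f1_mul_add_cobounded hb t)⟩
end

section
/- The second iterate f² maps the curve V₁ = {x = 0} to itself by the translation (0,y) ↦ (0, y + a − 1): for all a, b ∈ ℂ and every y ∈ ℂ with y ∉ {0, 1}, the point f(f(x, y)) tends to (0, y + a − 1) as x → 0 (the limit taken along nonzero x for which both f(x,y) and f(f(x,y)) are defined). -/
open Filter

/-- The birational map `f = f_{a,b}` as a (total) function on `ℂ²`. -/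
noncomputable def fmap (a b : ℂ) (p : ℂ × ℂ) : ℂ × ℂ := (f1 p.1 p.2, f2 a b p.1 p.2)

/-- The second iterate `f²` maps `V₁ = {x = 0}` to itself by the translation
`(0,y) ↦ (0, y + a - 1)`: for `y ∉ {0,1}`, the point `f(f(x,y))` tends to `(0, y + a - 1)`
as `x → 0` along nonzero `x` for which both `f(x,y)` and `f(f(x,y))` are defined. -/
theorem f2_on_V1 (a b : ℂ) (y : ℂ) (hy0 : y ≠ 0) (hy1 : y ≠ 1) :
    Tendsto (fun x : ℂ => fmap a b (fmap a b (x, y)))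
      (nhdsWithin 0 {x : ℂ | x ≠ 0 ∧ f1 x y ≠ 0 ∧ f2 a b x y ≠ 0})
      (nhds ((0 : ℂ), y + a - 1)) := by
  set q : ℂ → ℂ := fun x => b * (x * f1 x y) + (a + y) * x - y with hq
  set F : ℂ → ℂ := fun x => x * (y - 1) / y + (x * f1 x y) / q x with hF
  set G : ℂ → ℂ := fun x => b * F x + a + q x * (1 - y) / (y * f1 x y) with hG
  have hqx : ∀ x : ℂ, x ≠ 0 → q x = x * f2 a b x y := by
    intro x hx
    simp only [hq, f2, f1]
    field_simp
    ring
  have heq : ∀ x ∈ {x : ℂ | x ≠ 0 ∧ f1 x y ≠ 0 ∧ f2 a b x y ≠ 0},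
      fmap a b (fmap a b (x, y)) = (F x, G x) := by
    intro x hx
    obtain ⟨hx0, hX, hY⟩ := hx
    have hq' := hqx x hx0
    have h1 : f1 (f1 x y) (f2 a b x y) = F x := by
      simp only [hF, hq']
      rw [show f1 (f1 x y) (f2 a b x y)
          = 1 - f1 x y + f1 x y / f2 a b x y from rfl,
        show (1 : ℂ) - f1 x y = x * (y - 1) / y by
          simp only [f1]; field_simp; ring,
        ← mul_div_mul_left (f1 x y) (f2 a b x y) hx0]
    have h2 : f2 a b (f1 x y) (f2 a b x y) = G x := by
      simp only [hG, ← h1, hq']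
      have : f2 a b x y - f2 a b x y / f1 x y
          = x * f2 a b x y * (1 - y) / (y * f1 x y) := by
        rw [eq_div_iff (mul_ne_zero hy0 hX)]
        have hX1 : f1 x y - 1 = x * (1 - y) / y := by
          simp only [f1]; field_simp; ring
        have : f2 a b x y - f2 a b x y / f1 x y
            = f2 a b x y * (f1 x y - 1) / f1 x y := by
          field_simp
        rw [this, hX1]
        field_simp
      rw [show f2 a b (f1 x y) (f2 a b x y)
          = b * f1 (f1 x y) (f2 a b x y) + a + f2 a b x y - f2 a b x y / f1 x y from rfl,
        add_sub_assoc, this]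
    simp only [fmap, h1, h2]
  apply Tendsto.congr' (Filter.eventuallyEq_of_mem self_mem_nhdsWithin
    (fun x hx => (heq x hx).symm))
  -- now compute the limit of (F, G)
  have hf1 : Tendsto (fun x : ℂ => f1 x y) (nhdsWithin 0 {x : ℂ | x ≠ 0 ∧ f1 x y ≠ 0 ∧ f2 a b x y ≠ 0}) (nhds 1) := by
    have : Tendsto (fun x : ℂ => f1 x y) (nhds 0) (nhds (f1 0 y)) := by
      simp only [f1]
      exact (((continuous_const.sub continuous_id).add
        (continuous_id.div_const y)).tendsto 0)
    simp only [f1, zero_div, sub_zero, add_zero] at this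
    exact this.mono_left nhdsWithin_le_nhds
  have hxf1 : Tendsto (fun x : ℂ => x * f1 x y) (nhdsWithin 0 {x : ℂ | x ≠ 0 ∧ f1 x y ≠ 0 ∧ f2 a b x y ≠ 0}) (nhds 0) := by
    have := (tendsto_id.mono_left (nhdsWithin_le_nhds (s := {x : ℂ | x ≠ 0 ∧ f1 x y ≠ 0 ∧ f2 a b x y ≠ 0}))).mul hf1
    simpa using this
  have hqt : Tendsto q (nhdsWithin 0 {x : ℂ | x ≠ 0 ∧ f1 x y ≠ 0 ∧ f2 a b x y ≠ 0}) (nhds (-y)) := by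
    have : Tendsto (fun x : ℂ => b * (x * f1 x y) + (a + y) * x - y) _ (nhds (b * 0 + (a + y) * 0 - y)) :=
      ((tendsto_const_nhds.mul hxf1).add ((tendsto_id.mono_left nhdsWithin_le_nhds).const_mul (a + y))).sub tendsto_const_nhds
    simpa using this
  have hFt : Tendsto F (nhdsWithin 0 {x : ℂ | x ≠ 0 ∧ f1 x y ≠ 0 ∧ f2 a b x y ≠ 0}) (nhds 0) := by
    have h1 : Tendsto (fun x : ℂ => x * (y - 1) / y) (nhdsWithin 0 {x : ℂ | x ≠ 0 ∧ f1 x y ≠ 0 ∧ f2 a b x y ≠ 0}) (nhds 0) := by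
      have h0 : Tendsto (fun x : ℂ => x * (y - 1) / y) (nhds 0) (nhds (id 0 * (y - 1) / y)) :=
        ((continuous_id.mul continuous_const).div_const y).tendsto 0
      simpa using h0.mono_left nhdsWithin_le_nhds
    have h2 := hxf1.div hqt (neg_ne_zero.mpr hy0)
    simpa using h1.add h2
  have hGt : Tendsto G (nhdsWithin 0 {x : ℂ | x ≠ 0 ∧ f1 x y ≠ 0 ∧ f2 a b x y ≠ 0}) (nhds (y + a - 1)) := by
    have h3 : Tendsto (fun x : ℂ => q x * (1 - y) / (y * f1 x y)) (nhdsWithin 0 {x : ℂ | x ≠ 0 ∧ f1 x y ≠ 0 ∧ f2 a b x y ≠ 0})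
        (nhds (-y * (1 - y) / (y * 1))) :=
      (hqt.mul_const (1 - y)).div (tendsto_const_nhds.mul hf1) (by simpa using hy0)
    have h4 : Tendsto G (nhdsWithin 0 {x : ℂ | x ≠ 0 ∧ f1 x y ≠ 0 ∧ f2 a b x y ≠ 0})
        (nhds (b * 0 + a + -y * (1 - y) / (y * 1))) :=
      ((hFt.const_mul b).add_const a).add h3
    have heval : b * 0 + a + -y * (1 - y) / (y * 1) = y + a - 1 := by
      field_simp
      ring
    rwa [heval] at h4
  exact hFt.prodMk_nhds hGt
end

section
/- Let A be the 5×5 complex matrix with rows (2,0,1,0,1), (1,1,0,0,1), (1,0,0,0,1), (−1,0,0,0,0), (0,0,0,1,0), and let ρ be the unique real root of x³ − x² − 2x − 1. Then for any matrix norm ‖·‖ the limit lim_{n→∞} ‖Aⁿ‖^{1/n} exists and equals ρ; equivalently, the spectral radius of A is ρ. -/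
/-!
The characteristic polynomial of `ApicC` is `(X³ - X² - 2X - 1)(X - 1)²`, and by the triangle
inequality every complex root `z` of the cubic satisfies `‖z‖³ ≤ ‖z‖² + 2‖z‖ + 1`, which forces
`‖z‖ ≤ ρ`; so the spectral radius is `ρ`. Gelfand's formula gives the limit for the
(submultiplicative) `ℓ∞` operator norm, and since all norms on a finite-dimensional space are
equivalent, the constants disappear under the `n`-th root.
-/

open Filter

/-- The matrix of the pullback `f*` on `Pic(𝒳)`, as a complex matrix. -/
def ApicC : Matrix (Fin 5) (Fin 5) ℂ :=
  !![2, 0, 1, 0, 1;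
     1, 1, 0, 0, 1;
     1, 0, 0, 0, 1;
    -1, 0, 0, 0, 0;
     0, 0, 0, 1, 0]

open Topology Polynomial

section NormEquivalence

variable {E : Type*} [NormedAddCommGroup E] [NormedSpace ℂ E] [FiniteDimensional ℂ E]

theorem Seminorm.continuous_of_finiteDimensional (p : Seminorm ℂ E) : Continuous p :=
  p.convexOn.locallyLipschitz.continuous

theorem Seminorm.exists_pos_mul_norm_le (p : Seminorm ℂ E) (hp : ∀ x, p x = 0 → x = 0) :
    ∃ c, 0 < c ∧ ∀ x, c * ‖x‖ ≤ p x := by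
  cases subsingleton_or_nontrivial E
  · exact ⟨1, one_pos, fun x => by simp [Subsingleton.elim x 0]⟩
  obtain ⟨x₀, hx₀, hmin⟩ := (isCompact_sphere (0 : E) 1).exists_isMinOn
    (NormedSpace.sphere_nonempty.mpr zero_le_one) p.continuous_of_finiteDimensional.continuousOn
  have hx₀ne : x₀ ≠ 0 := ne_zero_of_mem_unit_sphere ⟨x₀, hx₀⟩
  refine ⟨p x₀, (apply_nonneg p x₀).lt_of_ne' (mt (hp x₀) hx₀ne), fun x => ?_⟩
  rcases eq_or_ne x 0 with rfl | hx
  · simp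
  have hx' : ‖x‖ ≠ 0 := norm_ne_zero_iff.mpr hx
  have hunit : (‖x‖⁻¹ : ℂ) • x ∈ Metric.sphere (0 : E) 1 := by
    simp [norm_smul, hx']
  calc p x₀ * ‖x‖ ≤ p ((‖x‖⁻¹ : ℂ) • x) * ‖x‖ := by gcongr; exact hmin hunit
    _ = p x := by simp [map_smul_eq_mul]; field_simp

end NormEquivalence

theorem tendsto_rpow_one_div_of_le_of_le {u v : ℕ → ℝ} {c C r : ℝ} (hc : 0 < c) (hC : 0 < C)
    (hv : ∀ n, 0 ≤ v n) (hlo : ∀ n, c * v n ≤ u n) (hhi : ∀ n, u n ≤ C * v n)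
    (h : Tendsto (fun n => v n ^ (1 / n : ℝ)) atTop (𝓝 r)) :
    Tendsto (fun n => u n ^ (1 / n : ℝ)) atTop (𝓝 r) := by
  have hroot : ∀ {b : ℝ}, 0 < b → Tendsto (fun n : ℕ => b ^ (1 / n : ℝ)) atTop (𝓝 1) := by
    intro b hb
    simpa [Function.comp_def] using ((Real.continuousAt_const_rpow hb.ne').tendsto.comp
      tendsto_one_div_atTop_nhds_zero_nat)
  have hlower : Tendsto (fun n : ℕ => (c * v n) ^ (1 / n : ℝ)) atTop (𝓝 r) := by
    simpa [Real.mul_rpow hc.le (hv _)] using (hroot hc).mul h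
  have hupper : Tendsto (fun n : ℕ => (C * v n) ^ (1 / n : ℝ)) atTop (𝓝 r) := by
    simpa [Real.mul_rpow hC.le (hv _)] using (hroot hC).mul h
  refine tendsto_of_tendsto_of_tendsto_of_le_of_le hlower hupper (fun n => ?_) (fun n => ?_)
  · exact Real.rpow_le_rpow (mul_nonneg hc.le (hv n)) (hlo n) (by positivity)
  · exact Real.rpow_le_rpow ((mul_nonneg hc.le (hv n)).trans (hlo n)) (hhi n) (by positivity)

theorem spectrum.spectralRadius_ne_top {𝕜 A : Type*} [NontriviallyNormedField 𝕜] [NormedRing A]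
    [NormedAlgebra 𝕜 A] [CompleteSpace A] (a : A) : spectralRadius 𝕜 a ≠ ⊤ :=
  ne_top_of_le_ne_top (ENNReal.mul_ne_top enorm_ne_top enorm_ne_top) <| iSup₂_le fun _ hk => by
    simpa [enorm_eq_nnnorm] using ENNReal.ofReal_le_ofReal (spectrum.norm_le_norm_mul_of_mem hk)

theorem spectralRadius_eq_ofReal_of_isGreatest {𝕜 A : Type*} [NormedField 𝕜] [Ring A]
    [Algebra 𝕜 A] {a : A} {r : ℝ} (h : IsGreatest ((‖·‖) '' spectrum 𝕜 a) r) :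
    spectralRadius 𝕜 a = ENNReal.ofReal r := by
  obtain ⟨⟨z, hz, rfl⟩, hle⟩ := h
  refine le_antisymm (iSup₂_le fun k hk => ?_) (le_iSup₂_of_le z hz ?_)
  · simpa [enorm_eq_nnnorm] using ENNReal.ofReal_le_ofReal (hle ⟨k, hk, rfl⟩)
  · simp [← ENNReal.ofReal_coe_nnreal]

theorem Matrix.tendsto_seminorm_pow_rpow_one_div_spectralRadius {n : Type*} [Fintype n]
    [DecidableEq n] (p : Seminorm ℂ (Matrix n n ℂ)) (hp : ∀ x, p x = 0 → x = 0) (A : Matrix n n ℂ) :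
    Tendsto (fun k : ℕ => p (A ^ k) ^ (1 / k : ℝ)) atTop (𝓝 (spectralRadius ℂ A).toReal) := by
  let := Matrix.linftyOpNormedRing (n := n) (α := ℂ)
  let := Matrix.linftyOpNormedAlgebra (n := n) (R := ℂ) (α := ℂ)
  obtain ⟨c, hc, hlo⟩ := p.exists_pos_mul_norm_le hp
  obtain ⟨C, hC, hhi⟩ := p.bound_of_continuous_normedSpace p.continuous_of_finiteDimensional
  have gelfand := (ENNReal.tendsto_toReal (spectrum.spectralRadius_ne_top A)).comp
    (spectrum.pow_norm_pow_one_div_tendsto_nhds_spectralRadius A)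
  refine tendsto_rpow_one_div_of_le_of_le hc hC (fun k => norm_nonneg (A ^ k))
    (fun k => hlo _) (fun k => hhi _) ?_
  refine gelfand.congr fun k => ?_
  simp [ENNReal.toReal_ofReal, Real.rpow_nonneg]

section Cubic

variable {ρ : ℝ} (hρ : ρ ^ 3 - ρ ^ 2 - 2 * ρ - 1 = 0)
include hρ

theorem two_lt_of_cubic_eq_zero : 2 < ρ := by
  nlinarith [sq_nonneg (ρ + 1), sq_nonneg ρ, sq_nonneg (2 * ρ + 1), sq_nonneg (ρ - 2)]

theorem le_of_cube_le {t : ℝ} (ht : t ^ 3 ≤ t ^ 2 + 2 * t + 1) : t ≤ ρ := by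
  have hρ2 := two_lt_of_cubic_eq_zero hρ
  by_contra! htρ
  -- t³ - t² - 2t - 1 = (t - ρ)(t² + tρ + ρ² - t - ρ - 2), and both factors are positive
  nlinarith [mul_pos (sub_pos.mpr htρ) (by nlinarith : 0 < t ^ 2 + t * ρ + ρ ^ 2 - t - ρ - 2)]

theorem norm_le_of_cubic_eq_zero {z : ℂ} (hz : z ^ 3 - z ^ 2 - 2 * z - 1 = 0) : ‖z‖ ≤ ρ := by
  have hz3 : z ^ 3 = z ^ 2 + 2 * z + 1 := by linear_combination hz
  refine le_of_cube_le hρ ?_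
  calc ‖z‖ ^ 3 = ‖z ^ 2 + 2 * z + 1‖ := by rw [← norm_pow, hz3]
    _ ≤ ‖z‖ ^ 2 + 2 * ‖z‖ + 1 := by
      refine (norm_add₃_le ..).trans ?_
      simp [norm_pow]

end Cubic

theorem charpoly_ApicC : ApicC.charpoly = (X ^ 3 - X ^ 2 - 2 * X - 1) * (X - 1) ^ 2 := by
  rw [Matrix.charpoly]
  simp [Matrix.det_succ_row_zero, Fin.sum_univ_succ, Matrix.charmatrix_apply, ApicC,
    Fin.succAbove, map_ofNat]
  ring

theorem mem_spectrum_ApicC_iff {z : ℂ} :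
    z ∈ spectrum ℂ ApicC ↔ z ^ 3 - z ^ 2 - 2 * z - 1 = 0 ∨ z = 1 := by
  simp [Matrix.mem_spectrum_iff_isRoot_charpoly, charpoly_ApicC, sub_eq_zero]

theorem isGreatest_norm_spectrum_ApicC {ρ : ℝ} (hρ : ρ ^ 3 - ρ ^ 2 - 2 * ρ - 1 = 0) :
    IsGreatest ((‖·‖) '' spectrum ℂ ApicC) ρ := by
  refine ⟨⟨ρ, mem_spectrum_ApicC_iff.mpr (.inl (by exact_mod_cast hρ)), ?_⟩, ?_⟩
  · have := two_lt_of_cubic_eq_zero hρ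
    simp [abs_of_pos (by linarith : 0 < ρ)]
  · rintro _ ⟨z, hz, rfl⟩
    rcases mem_spectrum_ApicC_iff.mp hz with hz | rfl
    · exact norm_le_of_cubic_eq_zero hρ hz
    · simpa using (one_lt_two.trans (two_lt_of_cubic_eq_zero hρ)).le

/-- For any matrix norm `N`, the limit `lim ‖Aⁿ‖^{1/n}` exists and equals the unique real
root `ρ` of `x³ - x² - 2x - 1`; equivalently, the spectral radius of `A` is `ρ`. -/
theorem degree_growth_rate (ρ : ℝ) (hρ : ρ ^ 3 - ρ ^ 2 - 2 * ρ - 1 = 0) :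
    (∀ N : Matrix (Fin 5) (Fin 5) ℂ → ℝ,
      (∀ x y, N (x + y) ≤ N x + N y) →
      (∀ (c : ℂ) (x), N (c • x) = ‖c‖ * N x) →
      (∀ x, N x = 0 ↔ x = 0) →
      Tendsto (fun n : ℕ => (N (ApicC ^ n)) ^ ((1 : ℝ) / n)) atTop (nhds ρ)) ∧
    (∀ z ∈ spectrum ℂ ApicC, ‖z‖ ≤ ρ) ∧
    (∃ z ∈ spectrum ℂ ApicC, ‖z‖ = ρ) := by
  have hσ := isGreatest_norm_spectrum_ApicC hρ
  refine ⟨fun N hadd hsmul hzero => ?_, fun z hz => hσ.2 ⟨z, hz, rfl⟩, hσ.1⟩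
  have hρ0 : 0 ≤ ρ := by obtain ⟨z, -, rfl⟩ := hσ.1; exact norm_nonneg z
  have := Matrix.tendsto_seminorm_pow_rpow_one_div_spectralRadius (Seminorm.of N hadd hsmul)
    (fun x => (hzero x).mp) ApicC
  rwa [spectralRadius_eq_ofReal_of_isGreatest hσ, ENNReal.toReal_ofReal hρ0] at this
end

section
/- Let F be the 4×4 matrix with rows (0,1,1,0), (1,0,0,0), (0,1,1,1), (0,0,1,1), and for n ≥ 1 let W(n) denote the number of admissible words of length n, i.e., the number of maps w : {0,…,n−1} → {1,2,3,4} with F_{w(k), w(k+1)} = 1 for all 0 ≤ k < n−1 (equivalently, W(n+1) is the sum of all entries of Fⁿ). Then lim_{n→∞} W(n)^{1/n} exists and equals the unique real root ρ of x³ − x² − 2x − 1. (Equivalently, the topological entropy of the subshift of finite type Σ_F is log ρ.) -/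
open Filter

/-- The transition matrix `F` of the subshift `Σ_F`. -/
def Ftrans : Matrix (Fin 4) (Fin 4) ℕ := !![0, 1, 1, 0; 1, 0, 0, 0; 0, 1, 1, 1; 0, 0, 1, 1]

/-- `W n` is the number of admissible words of length `n` for the transition matrix `F`. -/
noncomputable def Wcount (n : ℕ) : ℕ :=
  Nat.card {w : Fin n → Fin 4 //
    ∀ (k : ℕ) (h : k + 1 < n), Ftrans (w ⟨k, by omega⟩) (w ⟨k + 1, h⟩) = 1}

namespace WordAux


def adm {n : ℕ} (w : Fin n → Fin 4) : Prop :=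
  ∀ (k : ℕ) (h : k + 1 < n), Ftrans (w ⟨k, by omega⟩) (w ⟨k + 1, h⟩) = 1

lemma Wcount_eq (n : ℕ) : Wcount n = Nat.card {w : Fin n → Fin 4 // adm w} := rfl

lemma natCard_sigma {ι : Type*} [Fintype ι] (β : ι → Type*) [∀ i, Finite (β i)] :
    Nat.card (Σ i, β i) = ∑ i, Nat.card (β i) := by
  letI := fun i => Fintype.ofFinite (β i)
  simp [Nat.card_eq_fintype_card, Fintype.card_sigma]

lemma card_fiber {α : Type*} [Finite α] (P : α → Prop) (f : α → Fin 4) :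
    Nat.card {x // P x} = ∑ j, Nat.card {x // P x ∧ f x = j} := by
  rw [← natCard_sigma]
  apply Nat.card_congr
  exact ((Equiv.sigmaCongrRight fun j =>
      (Equiv.subtypeSubtypeEquivSubtypeInter P (fun x => f x = j)).symm).trans
    (Equiv.sigmaFiberEquiv fun x : {x // P x} => f x.1)).symm

lemma adm_cons {n : ℕ} (a : Fin 4) (v : Fin (n + 1) → Fin 4) :
    adm (Fin.cons a v : Fin (n + 2) → Fin 4) ↔ Ftrans a (v 0) = 1 ∧ adm v := by
  constructor
  · intro H
    constructor
    · have h := H 0 (by omega)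
      have e0 : (⟨0, by omega⟩ : Fin (n + 2)) = 0 := rfl
      have e1 : (⟨1, by omega⟩ : Fin (n + 2)) = Fin.succ 0 := rfl
      rw [e0, e1, Fin.cons_zero, Fin.cons_succ] at h
      exact h
    · intro k hk
      have h := H (k + 1) (by omega)
      have e0 : (⟨k + 1, by omega⟩ : Fin (n + 2)) = Fin.succ ⟨k, by omega⟩ := rfl
      have e1 : (⟨k + 1 + 1, by omega⟩ : Fin (n + 2)) = Fin.succ ⟨k + 1, hk⟩ := rfl
      rw [e0, e1, Fin.cons_succ, Fin.cons_succ] at h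
      exact h
  · rintro ⟨h1, h2⟩ k hk
    match k with
    | 0 =>
      have e0 : (⟨0, by omega⟩ : Fin (n + 2)) = 0 := rfl
      have e1 : (⟨1, hk⟩ : Fin (n + 2)) = Fin.succ 0 := rfl
      rw [e0, e1, Fin.cons_zero, Fin.cons_succ]
      exact h1
    | k + 1 =>
      have e0 : (⟨k + 1, by omega⟩ : Fin (n + 2)) = Fin.succ ⟨k, by omega⟩ := rfl
      have e1 : (⟨k + 1 + 1, hk⟩ : Fin (n + 2)) = Fin.succ ⟨k + 1, by omega⟩ := rfl
      rw [e0, e1, Fin.cons_succ, Fin.cons_succ]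
      exact h2 k (by omega)

def peel (n : ℕ) (i : Fin 4) :
    {w : Fin (n + 2) → Fin 4 // adm w ∧ w 0 = i} ≃
      {v : Fin (n + 1) → Fin 4 // Ftrans i (v 0) = 1 ∧ adm v} where
  toFun w := ⟨Fin.tail w.1, by
    obtain ⟨w, hw, h0⟩ := w
    have h : adm (Fin.cons i (Fin.tail w) : Fin (n + 2) → Fin 4) := by
      rw [← h0, Fin.cons_self_tail]; exact hw
    exact (adm_cons i (Fin.tail w)).1 h⟩
  invFun v := ⟨Fin.cons i v.1, by
    obtain ⟨v, h1, h2⟩ := v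
    exact ⟨(adm_cons i v).2 ⟨h1, h2⟩, Fin.cons_zero _ _⟩⟩
  left_inv := by
    rintro ⟨w, hw, h0⟩
    apply Subtype.ext
    show Fin.cons i (Fin.tail w) = w
    rw [← h0, Fin.cons_self_tail]
  right_inv := by
    rintro ⟨v, h1, h2⟩
    apply Subtype.ext
    simp

lemma Ftrans_eq_zero {i j : Fin 4} (h : Ftrans i j ≠ 1) : Ftrans i j = 0 := by
  revert h; fin_cases i <;> fin_cases j <;> decide

lemma card_cond (n : ℕ) (i j : Fin 4) :
    Nat.card {v : Fin (n + 1) → Fin 4 // (Ftrans i (v 0) = 1 ∧ adm v) ∧ v 0 = j} =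
      Ftrans i j * Nat.card {v : Fin (n + 1) → Fin 4 // adm v ∧ v 0 = j} := by
  by_cases h : Ftrans i j = 1
  · rw [h, one_mul]
    apply Nat.card_congr
    apply Equiv.subtypeEquivRight
    intro v
    constructor
    · rintro ⟨⟨_, h2⟩, h3⟩; exact ⟨h2, h3⟩
    · rintro ⟨h2, h3⟩; exact ⟨⟨by rw [h3]; exact h, h2⟩, h3⟩
  · rw [Ftrans_eq_zero h, zero_mul]
    rw [Nat.card_eq_zero]
    left
    constructor
    rintro ⟨v, ⟨h1, _⟩, h3⟩
    rw [h3] at h1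
    exact h h1

lemma card_start (n : ℕ) (i : Fin 4) :
    Nat.card {w : Fin (n + 1) → Fin 4 // adm w ∧ w 0 = i} = ∑ j, (Ftrans ^ n) i j := by
  induction n generalizing i with
  | zero =>
    have h1 : Nat.card {w : Fin 1 → Fin 4 // adm w ∧ w 0 = i} = 1 := by
      rw [Nat.card_eq_one_iff_unique]
      refine ⟨⟨fun w w' => ?_⟩, ⟨⟨fun _ => i, fun k h => by omega, rfl⟩⟩⟩
      apply Subtype.ext
      funext k
      have hk : k = 0 := Subsingleton.elim _ _
      rw [hk, w.2.2, w'.2.2]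
    rw [h1]
    simp [Matrix.one_apply]
  | succ n ih =>
    rw [Nat.card_congr (peel n i),
      card_fiber (fun v : Fin (n + 1) → Fin 4 => Ftrans i (v 0) = 1 ∧ adm v) (fun v => v 0)]
    have hsum : ∀ j, Nat.card {v : Fin (n + 1) → Fin 4 // (Ftrans i (v 0) = 1 ∧ adm v) ∧ v 0 = j}
        = Ftrans i j * ∑ k, (Ftrans ^ n) j k := by
      intro j; rw [card_cond, ih]
    rw [Finset.sum_congr rfl fun j _ => hsum j]
    rw [pow_succ']
    simp only [Matrix.mul_apply]
    rw [Finset.sum_comm]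
    simp [Finset.mul_sum]

lemma part2 (n : ℕ) : Wcount (n + 1) = ∑ i : Fin 4, ∑ j : Fin 4, (Ftrans ^ n) i j := by
  rw [Wcount_eq, card_fiber (fun w : Fin (n + 1) → Fin 4 => adm w) (fun w => w 0)]
  exact Finset.sum_congr rfl fun i _ => card_start n i



noncomputable def Sr (n : ℕ) : ℝ := ∑ i : Fin 4, ∑ j : Fin 4, ((Ftrans ^ n) i j : ℝ)

noncomputable def vv (n : ℕ) (j : Fin 4) : ℝ := ∑ i : Fin 4, ((Ftrans ^ n) i j : ℝ)

lemma Sr_eq (n : ℕ) : Sr n = vv n 0 + vv n 1 + vv n 2 + vv n 3 := by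
  rw [Sr, Finset.sum_comm]
  simp [vv, Fin.sum_univ_four]

lemma step (n : ℕ) (j : Fin 4) :
    vv (n + 1) j = ∑ i : Fin 4, vv n i * (Ftrans i j : ℝ) := by
  simp only [vv, pow_succ, Matrix.mul_apply]
  push_cast
  rw [Finset.sum_comm]
  simp [Finset.sum_mul]

lemma Ftrans_vals : Ftrans 0 0 = 0 ∧ Ftrans 0 1 = 1 ∧ Ftrans 0 2 = 1 ∧ Ftrans 0 3 = 0 ∧
    Ftrans 1 0 = 1 ∧ Ftrans 1 1 = 0 ∧ Ftrans 1 2 = 0 ∧ Ftrans 1 3 = 0 ∧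
    Ftrans 2 0 = 0 ∧ Ftrans 2 1 = 1 ∧ Ftrans 2 2 = 1 ∧ Ftrans 2 3 = 1 ∧
    Ftrans 3 0 = 0 ∧ Ftrans 3 1 = 0 ∧ Ftrans 3 2 = 1 ∧ Ftrans 3 3 = 1 := by decide

lemma combo (n : ℕ) : vv n 0 + vv n 1 - vv n 3 = 1 := by
  induction n with
  | zero => simp [vv, Matrix.one_apply, Fin.sum_univ_four]
  | succ n ih =>
    have h0 := step n 0
    have h1 := step n 1
    have h3 := step n 3
    simp only [Fin.sum_univ_four] at h0 h1 h3
    norm_num [Ftrans_vals, Matrix.cons_val_zero, Matrix.cons_val_one, Matrix.head_cons,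
      Matrix.vecHead, Matrix.vecTail] at h0 h1 h3
    rw [h0, h1, h3]
    linarith

lemma rec3 (n : ℕ) : Sr (n + 3) + 1 = Sr (n + 2) + 2 * Sr (n + 1) + Sr n := by
  have c := combo n
  have s10 := step n 0
  have s11 := step n 1
  have s12 := step n 2
  have s13 := step n 3
  have s20 := step (n + 1) 0
  have s21 := step (n + 1) 1
  have s22 := step (n + 1) 2
  have s23 := step (n + 1) 3
  have s30 := step (n + 2) 0
  have s31 := step (n + 2) 1
  have s32 := step (n + 2) 2
  have s33 := step (n + 2) 3
  simp only [Fin.sum_univ_four, show n + 1 + 1 = n + 2 from rfl,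
    show n + 2 + 1 = n + 3 from rfl] at s10 s11 s12 s13 s20 s21 s22 s23 s30 s31 s32 s33
  norm_num [Ftrans_vals, Matrix.cons_val_zero, Matrix.cons_val_one, Matrix.head_cons,
    Matrix.vecHead, Matrix.vecTail] at s10 s11 s12 s13 s20 s21 s22 s23 s30 s31 s32 s33
  rw [Sr_eq (n + 3), Sr_eq (n + 2), Sr_eq (n + 1), Sr_eq n]
  linarith

lemma Sr0 : Sr 0 = 4 := by
  have h : ∑ i : Fin 4, ∑ j : Fin 4, ((Ftrans ^ 0) i j : ℕ) = 4 := by decide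
  have h2 := congrArg (Nat.cast : ℕ → ℝ) h
  push_cast at h2
  exact h2

lemma Sr1 : Sr 1 = 8 := by
  have h : ∑ i : Fin 4, ∑ j : Fin 4, ((Ftrans ^ 1) i j : ℕ) = 8 := by decide
  have h2 := congrArg (Nat.cast : ℕ → ℝ) h
  push_cast at h2
  exact h2

lemma Sr2 : Sr 2 = 17 := by
  have h : ∑ i : Fin 4, ∑ j : Fin 4, ((Ftrans ^ 2) i j : ℕ) = 17 := by decide
  have h2 := congrArg (Nat.cast : ℕ → ℝ) h
  push_cast at h2
  exact h2

lemma bounds (ρ : ℝ) (h2 : 2 < ρ) (h3 : ρ < 3) (hcube : ρ ^ 3 = ρ ^ 2 + 2 * ρ + 1) :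
    ∀ n : ℕ, (1 / 4) * ρ ^ n + 1 / 2 ≤ Sr n ∧ Sr n ≤ 5 * ρ ^ n := by
  intro n
  induction n using Nat.strong_induction_on with
  | _ n ih =>
    match n with
    | 0 => rw [Sr0]; norm_num
    | 1 => rw [Sr1]; constructor <;> nlinarith
    | 2 => rw [Sr2]; constructor <;> nlinarith
    | (m + 3) =>
      have i0 := ih m (by omega)
      have i1 := ih (m + 1) (by omega)
      have i2 := ih (m + 2) (by omega)
      have hr := rec3 m
      have hp : (0:ℝ) < ρ ^ m := by positivity
      have hpow3 : ρ ^ (m + 3) = ρ ^ m * ρ ^ 3 := by ring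
      have hpow2 : ρ ^ (m + 2) = ρ ^ m * ρ ^ 2 := by ring
      have hpow1 : ρ ^ (m + 1) = ρ ^ m * ρ := by ring
      constructor
      · rw [hpow3, hcube]
        nlinarith [i0.1, i1.1, i2.1]
      · rw [hpow3, hcube]
        nlinarith [i0.2, i1.2, i2.2]


lemma tendc (c : ℝ) (hc : 0 < c) :
    Tendsto (fun n : ℕ => c ^ ((1:ℝ)/n)) atTop (nhds 1) := by
  have h1 := (Real.continuousAt_const_rpow (a := c) (b := 0) (ne_of_gt hc)).tendsto
  have h2 := h1.comp tendsto_one_div_atTop_nhds_zero_nat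
  simpa [Function.comp_def] using h2

lemma key (c ρ : ℝ) (hc : 0 ≤ c) (hρ : 0 < ρ) (n : ℕ) (hn : n ≠ 0) :
    (c * ρ ^ n) ^ ((1:ℝ)/n) = c ^ ((1:ℝ)/n) * ρ := by
  rw [Real.mul_rpow hc (pow_nonneg hρ.le n), ← Real.rpow_natCast ρ n, ← Real.rpow_mul hρ.le]
  rw [mul_one_div, div_self (Nat.cast_ne_zero.mpr hn), Real.rpow_one]

lemma Wcast (m : ℕ) : (Wcount (m + 1) : ℝ) = Sr m := by
  rw [part2 m, Sr]
  push_cast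
  rfl

end WordAux

open WordAux in
/-- The number `W(n)` of admissible words of length `n` satisfies
`lim W(n)^{1/n} = ρ`, where `ρ` is the unique real root of `x³ - x² - 2x - 1`
(the topological entropy of `Σ_F` is `log ρ`); moreover `W(n+1)` is the sum of all the
entries of `Fⁿ`. -/
theorem word_count_growth (ρ : ℝ) (hρ : ρ ^ 3 - ρ ^ 2 - 2 * ρ - 1 = 0) :
    Tendsto (fun n : ℕ => (Wcount n : ℝ) ^ ((1 : ℝ) / n)) atTop (nhds ρ) ∧
    ∀ n : ℕ, Wcount (n + 1) = ∑ i : Fin 4, ∑ j : Fin 4, (Ftrans ^ n) i j := by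
  refine ⟨?_, part2⟩
  have h2 : 2 < ρ := by
    by_contra h
    push_neg at h
    nlinarith [sq_nonneg (ρ - 2), sq_nonneg (ρ + 1), sq_nonneg ρ, sq_nonneg (2*ρ + 1),
      sq_nonneg (ρ*2 - 1)]
  have h3 : ρ < 3 := by
    by_contra h
    push_neg at h
    nlinarith [sq_nonneg (ρ - 3), sq_nonneg ρ]
  have hρ0 : (0:ℝ) < ρ := by linarith
  have hcube : ρ ^ 3 = ρ ^ 2 + 2 * ρ + 1 := by linarith
  have B := bounds ρ h2 h3 hcube
  have hg : Tendsto (fun n : ℕ => (1/12 : ℝ) ^ ((1:ℝ)/n) * ρ) atTop (nhds ρ) := by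
    have := (tendc (1/12) (by norm_num)).mul_const ρ
    simpa using this
  have hh : Tendsto (fun n : ℕ => (5 : ℝ) ^ ((1:ℝ)/n) * ρ) atTop (nhds ρ) := by
    have := (tendc 5 (by norm_num)).mul_const ρ
    simpa using this
  refine tendsto_of_tendsto_of_tendsto_of_le_of_le' hg hh ?_ ?_
  · filter_upwards [eventually_ge_atTop 1] with n hn
    obtain ⟨m, rfl⟩ : ∃ m, n = m + 1 := ⟨n - 1, by omega⟩
    have hWm := Wcast m
    have hlow : (1/12 : ℝ) * ρ ^ (m + 1) ≤ (Wcount (m + 1) : ℝ) := by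
      rw [hWm]
      have hb := (B m).1
      have hp : (0:ℝ) < ρ ^ m := by positivity
      have : ρ ^ (m + 1) = ρ * ρ ^ m := by ring
      rw [this]
      nlinarith
    calc (1/12 : ℝ) ^ ((1:ℝ)/(m+1:ℕ)) * ρ
        = ((1/12 : ℝ) * ρ ^ (m+1)) ^ ((1:ℝ)/(m+1:ℕ)) := by
          rw [key (1/12) ρ (by norm_num) hρ0 (m+1) (by omega)]
      _ ≤ (Wcount (m + 1) : ℝ) ^ ((1:ℝ)/(m+1:ℕ)) := by
          apply Real.rpow_le_rpow (by positivity) hlow (by positivity)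
  · filter_upwards [eventually_ge_atTop 1] with n hn
    obtain ⟨m, rfl⟩ : ∃ m, n = m + 1 := ⟨n - 1, by omega⟩
    have hWm := Wcast m
    have hhigh : (Wcount (m + 1) : ℝ) ≤ (5 : ℝ) * ρ ^ (m + 1) := by
      rw [hWm]
      have hb := (B m).2
      have hp : (0:ℝ) < ρ ^ m := by positivity
      have : ρ ^ (m + 1) = ρ * ρ ^ m := by ring
      rw [this]
      nlinarith
    calc (Wcount (m + 1) : ℝ) ^ ((1:ℝ)/(m+1:ℕ))
        ≤ ((5 : ℝ) * ρ ^ (m+1)) ^ ((1:ℝ)/(m+1:ℕ)) := by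
          apply Real.rpow_le_rpow (by positivity) hhigh (by positivity)
      _ = (5 : ℝ) ^ ((1:ℝ)/(m+1:ℕ)) * ρ := by
          rw [key 5 ρ (by norm_num) hρ0 (m+1) (by omega)]
end
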